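/- The logic DHMSH is implicative with respect to the connective →_H, i.e.: (IL1) ⊢ α →_H α; (IL2) {α →_H β, β →_H γ} ⊢ α →_H γ; (IL3) {α₁ →_H β₁, β₁ →_H α₁, α₂ →_H β₂, β₂ →_H α₂} ⊢ (α₁ ∧ α₂) →_H (β₁ ∧ β₂), and likewise with ∧ replaced by ∨ and by →, and {α →_H β, β →_H α} ⊢ α' →_H β'; (IL4) {α, α →_H β} ⊢ β; (IL5) {α} ⊢ β →_H α. -/
import Mathlib

inductive Fm : Type where
  | var : ℕ → Fm
  | bot : Fm
  | top : Fm
  | and : Fm → Fm → Fm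
  | or : Fm → Fm → Fm
  | imp : Fm → Fm → Fm
  | neg : Fm → Fm

def hi (a b : Fm) : Fm := Fm.imp a (Fm.and a b)

inductive Deriv (Γ : Set Fm) : Fm → Prop where
  | hyp {φ : Fm} : φ ∈ Γ → Deriv Γ φ
  | a1 (α β : Fm) : Deriv Γ (hi α (Fm.or α β))
  | a2 (α β : Fm) : Deriv Γ (hi β (Fm.or α β))
  | a3 (α β γ : Fm) : Deriv Γ (hi (hi α γ) (hi (hi β γ) (hi (Fm.or α β) γ)))
  | a4 (α β : Fm) : Deriv Γ (hi (Fm.and α β) α)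
  | a5 (α β γ : Fm) : Deriv Γ (hi (hi γ α) (hi (hi γ β) (hi γ (Fm.and α β))))
  | a6 : Deriv Γ Fm.top
  | a7 (α : Fm) : Deriv Γ (hi Fm.bot α)
  | a8 (α β γ : Fm) : Deriv Γ (hi (hi (Fm.and α β) γ) (hi α (hi β γ)))
  | a9 (α β γ : Fm) : Deriv Γ (hi (hi α (hi β γ)) (hi (Fm.and α β) γ))
  | a10 (α β γ : Fm) :
      Deriv Γ (hi (hi α β) (hi (hi β α) (hi (Fm.imp α γ) (Fm.imp β γ))))
  | a11 (α β γ : Fm) :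
      Deriv Γ (hi (hi α β) (hi (hi β α) (hi (Fm.imp γ β) (Fm.imp γ α))))
  | a12 : Deriv Γ (hi Fm.top (Fm.neg Fm.bot))
  | a13 : Deriv Γ (hi (Fm.neg Fm.top) Fm.bot)
  | a14 (α β : Fm) : Deriv Γ (hi (Fm.neg (Fm.and α β)) (Fm.or (Fm.neg α) (Fm.neg β)))
  | smp {φ γ : Fm} : Deriv Γ φ → Deriv Γ (hi φ γ) → Deriv Γ γ
  | scp {φ γ : Fm} : Deriv Γ (hi φ γ) → Deriv Γ (hi (Fm.neg γ) (Fm.neg φ))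

namespace DhmshAux

variable {Γ : Set Fm}

/-- pairing: from `z ⇒ x` and `z ⇒ y` infer `z ⇒ x ∧ y` (A5). -/
theorem pair {z x y : Fm} (h1 : Deriv Γ (hi z x)) (h2 : Deriv Γ (hi z y)) :
    Deriv Γ (hi z (Fm.and x y)) :=
  .smp h2 (.smp h1 (.a5 x y z))

/-- K: `x ⇒ (v ⇒ x)` (A4 + A8). -/
theorem kk (x v : Fm) : Deriv Γ (hi x (hi v x)) :=
  .smp (.a4 x v) (.a8 x v x)

/-- weakening: from `φ` infer `v ⇒ φ`. -/
theorem weak {φ : Fm} (v : Fm) (h : Deriv Γ φ) : Deriv Γ (hi v φ) :=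
  .smp h (kk φ v)

/-- reflexivity: `x ⇒ x`. -/
theorem refl (x : Fm) : Deriv Γ (hi x x) := by
  set B := Fm.or x (Fm.and x x) with hB
  have h1 : Deriv Γ (hi (Fm.and x B) x) := .a4 x B
  have i : Deriv Γ (hi (Fm.and x B) (Fm.and x x)) := pair h1 h1
  have ii : Deriv Γ (hi (Fm.and x x) (Fm.and x B)) :=
    pair (.a4 x x) (.a2 x (Fm.and x x))
  have major : Deriv Γ (hi (hi x B) (hi x x)) :=
    .smp i (.smp ii (.a11 (Fm.and x x) (Fm.and x B) x))
  exact .smp (.a1 x (Fm.and x x)) major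

/-- right projection: `(x ∧ y) ⇒ y`. -/
theorem pi2 (x y : Fm) : Deriv Γ (hi (Fm.and x y) y) :=
  .smp (weak x (refl y)) (.a9 x y y)

/-- projections of right-nested triple conjunctions. -/
theorem rproj1 (x y z : Fm) : Deriv Γ (hi (Fm.and x (Fm.and y z)) y) :=
  .smp (weak x (.a4 y z)) (.a9 x (Fm.and y z) y)

theorem rproj2 (x y z : Fm) : Deriv Γ (hi (Fm.and x (Fm.and y z)) z) :=
  .smp (weak x (pi2 y z)) (.a9 x (Fm.and y z) z)

/-- substitution of equivalents in the consequent: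
from `z ⇒ x`, `x ⇒ y`, `y ⇒ x` infer `z ⇒ y`. -/
theorem sub {z x y : Fm} (h : Deriv Γ (hi z x))
    (hxy : Deriv Γ (hi x y)) (hyx : Deriv Γ (hi y x)) :
    Deriv Γ (hi z y) := by
  have d1 : Deriv Γ (hi (Fm.and z x) (Fm.and z y)) :=
    pair (.a4 z x) (.smp (weak z hxy) (.a9 z x y))
  have d2 : Deriv Γ (hi (Fm.and z y) (Fm.and z x)) :=
    pair (.a4 z y) (.smp (weak z hyx) (.a9 z y x))
  have major : Deriv Γ (hi (hi z x) (hi z y)) :=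
    .smp d1 (.smp d2 (.a11 (Fm.and z y) (Fm.and z x) z))
  exact .smp h major

/-- transitivity of `⇒`. -/
theorem htrans {a b c : Fm} (h1 : Deriv Γ (hi a b)) (h2 : Deriv Γ (hi b c)) :
    Deriv Γ (hi a c) := by
  have q : Deriv Γ (hi (Fm.and a b) c) := .smp (weak a h2) (.a9 a b c)
  have e1 : Deriv Γ (hi a (Fm.and a b)) := pair (refl a) h1
  have p1 : Deriv Γ (hi (Fm.and a b) (Fm.and a (Fm.and b c))) :=
    pair (.a4 a b) (pair (pi2 a b) q)
  have p2 : Deriv Γ (hi (Fm.and a (Fm.and b c)) (Fm.and a b)) :=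
    pair (.a4 a (Fm.and b c)) (rproj1 a b c)
  have s1 : Deriv Γ (hi a (Fm.and a (Fm.and b c))) := sub e1 p1 p2
  have t1 : Deriv Γ (hi (Fm.and a c) (Fm.and a b)) :=
    sub (.a4 a c) e1 (.a4 a b)
  have t2 : Deriv Γ (hi (Fm.and a c) (Fm.and a (Fm.and b c))) := sub t1 p1 p2
  have u1 : Deriv Γ (hi (Fm.and a (Fm.and b c)) (Fm.and a c)) :=
    pair (.a4 a (Fm.and b c)) (rproj2 a b c)
  have s2 : Deriv Γ (hi a (Fm.and a c)) := sub s1 u1 t2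
  have w1 : Deriv Γ (hi (Fm.and a c) (Fm.and a (Fm.and a c))) :=
    pair (.a4 a c) (refl (Fm.and a c))
  have w2 : Deriv Γ (hi (Fm.and a (Fm.and a c)) (Fm.and a c)) := pi2 a (Fm.and a c)
  have g : Deriv Γ (hi (hi a (Fm.and a c)) (hi a c)) :=
    .smp w2 (.smp w1 (.a11 (Fm.and a c) (Fm.and a (Fm.and a c)) a))
  exact .smp s2 g

end DhmshAux

open DhmshAux in
/-- The logic `DHMSH` is implicative with respect to `→_H`:
(IL1)–(IL5) in the sense of Rasiowa. -/
theorem dhmsh_implicative :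
    (∀ α : Fm, Deriv ∅ (hi α α)) ∧
    (∀ α β γ : Fm, Deriv ({hi α β, hi β γ} : Set Fm) (hi α γ)) ∧
    (∀ α₁ β₁ α₂ β₂ : Fm,
      Deriv ({hi α₁ β₁, hi β₁ α₁, hi α₂ β₂, hi β₂ α₂} : Set Fm)
        (hi (Fm.and α₁ α₂) (Fm.and β₁ β₂)) ∧
      Deriv ({hi α₁ β₁, hi β₁ α₁, hi α₂ β₂, hi β₂ α₂} : Set Fm)
        (hi (Fm.or α₁ α₂) (Fm.or β₁ β₂)) ∧
      Deriv ({hi α₁ β₁, hi β₁ α₁, hi α₂ β₂, hi β₂ α₂} : Set Fm)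
        (hi (Fm.imp α₁ α₂) (Fm.imp β₁ β₂))) ∧
    (∀ α β : Fm, Deriv ({hi α β, hi β α} : Set Fm) (hi (Fm.neg α) (Fm.neg β))) ∧
    (∀ α β : Fm, Deriv ({α, hi α β} : Set Fm) β) ∧
    (∀ α β : Fm, Deriv ({α} : Set Fm) (hi β α)) := by
  refine ⟨fun α => refl α, fun α β γ => ?_, fun α₁ β₁ α₂ β₂ => ⟨?_, ?_, ?_⟩,
    fun α β => ?_, fun α β => ?_, fun α β => ?_⟩
  · exact htrans (.hyp (by simp : hi α β ∈ _)) (.hyp (by simp : hi β γ ∈ _))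
  · exact pair (htrans (.a4 α₁ α₂) (.hyp (by simp : hi α₁ β₁ ∈ _)))
      (htrans (pi2 α₁ α₂) (.hyp (by simp : hi α₂ β₂ ∈ _)))
  · exact .smp (htrans (.hyp (by simp : hi α₂ β₂ ∈ _)) (.a2 β₁ β₂))
      (.smp (htrans (.hyp (by simp : hi α₁ β₁ ∈ _)) (.a1 β₁ β₂))
        (.a3 α₁ α₂ (Fm.or β₁ β₂)))
  · exact htrans
      (.smp (.hyp (by simp : hi β₁ α₁ ∈ _))
        (.smp (.hyp (by simp : hi α₁ β₁ ∈ _)) (.a10 α₁ β₁ α₂)))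
      (.smp (.hyp (by simp : hi α₂ β₂ ∈ _))
        (.smp (.hyp (by simp : hi β₂ α₂ ∈ _)) (.a11 β₂ α₂ β₁)))
  · exact .scp (.hyp (by simp : hi β α ∈ _))
  · exact .smp (.hyp (by simp : α ∈ _)) (.hyp (by simp : hi α β ∈ _))
  · exact weak β (.hyp (by simp : α ∈ _))
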